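/- Let C be a non-zero graded submodule of M. Then C is a graded strongly classical 2-absorbing second submodule of M if and only if for every graded submodule N of M with C ⊄ N, the ideal (N :_R C) = {r ∈ R : r·C ⊆ N} is a graded 2-absorbing ideal of R. -/

import Mathlib

open Pointwise

section GradedDefs

variable {G : Type*} [Group G] [DecidableEq G] {R : Type*} [CommRing R]
  {M : Type*} [AddCommGroup M] [Module R M]

/-- `R` is a `G`-graded commutative ring via the additive subgroups `𝒜 α`:
`R_α R_β ⊆ R_{αβ}` and `R = ⊕_{α ∈ G} R_α`. -/
structure IsRingGrading (𝒜 : G → AddSubgroup R) : Prop where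
  one_mem : (1 : R) ∈ 𝒜 1
  mul_mem : ∀ ⦃α β : G⦄ ⦃r s : R⦄, r ∈ 𝒜 α → s ∈ 𝒜 β → r * s ∈ 𝒜 (α * β)
  isInternal : DirectSum.IsInternal 𝒜

/-- `M` is a graded module over the `G`-graded ring `R`:
`R_α M_β ⊆ M_{αβ}` and `M = ⊕_{α ∈ G} M_α`. -/
structure IsModuleGrading (𝒜 : G → AddSubgroup R) (ℳ : G → AddSubgroup M) : Prop where
  smul_mem : ∀ ⦃α β : G⦄ ⦃r : R⦄ ⦃m : M⦄, r ∈ 𝒜 α → m ∈ ℳ β → r • m ∈ ℳ (α * β)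
  isInternal : DirectSum.IsInternal ℳ

/-- A submodule `N` of `M` is a graded submodule iff `N = ⊕_{α ∈ G} (N ∩ M_α)`,
equivalently, every element of `N` is a sum of homogeneous elements of `N`. -/
def IsGradedSubmodule (ℳ : G → AddSubgroup M) (N : Submodule R M) : Prop :=
  ∀ n ∈ N, n ∈ Submodule.span R {m : M | m ∈ N ∧ ∃ α, m ∈ ℳ α}

/-- An ideal `I` of `R` is a graded ideal iff `I = ⊕_{α ∈ G} (I ∩ R_α)`. -/
def IsGradedIdeal (𝒜 : G → AddSubgroup R) (I : Ideal R) : Prop :=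
  ∀ r ∈ I, r ∈ Ideal.span {s : R | s ∈ I ∧ ∃ α, s ∈ 𝒜 α}

/-- A proper graded submodule `C` of `M` is completely graded irreducible if whenever
`C = ⋂_{λ ∈ Δ} C_λ` for a family of graded submodules `C_λ`, then `C = C_β` for some `β`. -/
def CompletelyGradedIrreducible (ℳ : G → AddSubgroup M) (C : Submodule R M) : Prop :=
  IsGradedSubmodule ℳ C ∧ C ≠ ⊤ ∧
    ∀ S : Set (Submodule R M), (∀ D ∈ S, IsGradedSubmodule ℳ D) → C = sInf S → C ∈ S

/-- A non-zero graded submodule `C` of `M` is a graded classical 2-absorbing second submodule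
if whenever `r, s, t ∈ h(R)`, `U` is a completely graded irreducible submodule of `M` and
`r·s·t·C ⊆ U`, then `r·s·C ⊆ U` or `s·t·C ⊆ U` or `r·t·C ⊆ U`. -/
def IsGrClassical2AbsorbingSecond (𝒜 : G → AddSubgroup R) (ℳ : G → AddSubgroup M)
    (C : Submodule R M) : Prop :=
  C ≠ ⊥ ∧ IsGradedSubmodule ℳ C ∧
    ∀ r s t : R, (∃ α, r ∈ 𝒜 α) → (∃ β, s ∈ 𝒜 β) → (∃ γ, t ∈ 𝒜 γ) →
      ∀ U : Submodule R M, CompletelyGradedIrreducible ℳ U →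
        r • s • t • C ≤ U → (r • s • C ≤ U ∨ s • t • C ≤ U ∨ r • t • C ≤ U)

/-- A non-zero graded submodule `C` of `M` is a graded strongly classical 2-absorbing second
submodule if whenever `r, s, t ∈ h(R)`, `U₁, U₂, U₃` are completely graded irreducible
submodules of `M` and `r·s·t·C ⊆ U₁ ∩ U₂ ∩ U₃`, then `r·s·C ⊆ U₁ ∩ U₂ ∩ U₃` or
`s·t·C ⊆ U₁ ∩ U₂ ∩ U₃` or `r·t·C ⊆ U₁ ∩ U₂ ∩ U₃`. -/
def IsGrStronglyClassical2AbsorbingSecond (𝒜 : G → AddSubgroup R) (ℳ : G → AddSubgroup M)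
    (C : Submodule R M) : Prop :=
  C ≠ ⊥ ∧ IsGradedSubmodule ℳ C ∧
    ∀ r s t : R, (∃ α, r ∈ 𝒜 α) → (∃ β, s ∈ 𝒜 β) → (∃ γ, t ∈ 𝒜 γ) →
      ∀ U₁ U₂ U₃ : Submodule R M, CompletelyGradedIrreducible ℳ U₁ →
        CompletelyGradedIrreducible ℳ U₂ → CompletelyGradedIrreducible ℳ U₃ →
        r • s • t • C ≤ U₁ ⊓ U₂ ⊓ U₃ →
        (r • s • C ≤ U₁ ⊓ U₂ ⊓ U₃ ∨ s • t • C ≤ U₁ ⊓ U₂ ⊓ U₃ ∨ r • t • C ≤ U₁ ⊓ U₂ ⊓ U₃)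

/-- A non-zero graded submodule `S` of `M` is a graded weakly second submodule if whenever
`r, s ∈ h(R)`, `N` is a graded submodule of `M` and `r·s·S ⊆ N`, then `r·S ⊆ N` or `s·S ⊆ N`. -/
def IsGrWeaklySecond (𝒜 : G → AddSubgroup R) (ℳ : G → AddSubgroup M)
    (S : Submodule R M) : Prop :=
  S ≠ ⊥ ∧ IsGradedSubmodule ℳ S ∧
    ∀ r s : R, (∃ α, r ∈ 𝒜 α) → (∃ β, s ∈ 𝒜 β) →
      ∀ N : Submodule R M, IsGradedSubmodule ℳ N →
        r • s • S ≤ N → (r • S ≤ N ∨ s • S ≤ N)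

/-- A proper graded ideal `I` of `R` is a graded 2-absorbing ideal if whenever `r, s, t ∈ h(R)`
with `r·s·t ∈ I`, then `r·s ∈ I` or `r·t ∈ I` or `s·t ∈ I`. -/
def IsGr2AbsorbingIdeal (𝒜 : G → AddSubgroup R) (I : Ideal R) : Prop :=
  I ≠ ⊤ ∧ IsGradedIdeal 𝒜 I ∧
    ∀ r s t : R, (∃ α, r ∈ 𝒜 α) → (∃ β, s ∈ 𝒜 β) → (∃ γ, t ∈ 𝒜 γ) →
      r * s * t ∈ I → (r * s ∈ I ∨ r * t ∈ I ∨ s * t ∈ I)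

end GradedDefs

/-!
The colon ideal `(N :_R C)` is graded because, for `c ∈ C` homogeneous of degree `β`, the
product of the `γ`-component of `r` with `c` is the `γβ`-component of `r • c`. If a homogeneous
triple `r, s, t` violated 2-absorption of `(N :_R C)`, the elements of `C` that `rs`, `st` and `rt`
push out of `N` could, by Zorn's lemma, be kept out of three completely graded irreducible
submodules containing `N`, contradicting the strong 2-absorbing property. Conversely, an
intersection `U₁ ∩ U₂ ∩ U₃` of completely graded irreducible submodules is itself a graded
submodule, to which the colon criterion applies.
-/

open DirectSum

section GradedSubmodule

variable {ι R M : Type*} [CommRing R] [AddCommGroup M] [Module R M] {ℳ : ι → AddSubgroup M}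

lemma isGradedSubmodule_sSup {S : Set (Submodule R M)} (hS : ∀ N ∈ S, IsGradedSubmodule ℳ N) :
    IsGradedSubmodule ℳ (sSup S) := by
  refine fun _ hn => (sSup_le fun N hN _ hm => Submodule.span_mono ?_ (hS N hN _ hm)) hn
  exact fun _ hx => ⟨le_sSup hN hx.1, hx.2⟩

lemma IsGradedSubmodule.exists_completelyGradedIrreducible {N : Submodule R M}
    (hN : IsGradedSubmodule ℳ N) {m : M} (hm : m ∉ N) :
    ∃ U, CompletelyGradedIrreducible ℳ U ∧ N ≤ U ∧ m ∉ U := by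
  let S : Set (Submodule R M) := {U | IsGradedSubmodule ℳ U ∧ N ≤ U ∧ m ∉ U}
  have hchain : ∀ c ⊆ S, IsChain (· ≤ ·) c → ∀ D ∈ c, ∃ ub ∈ S, ∀ E ∈ c, E ≤ ub := by
    refine fun c hcS hc D hD => ⟨sSup c, ⟨isGradedSubmodule_sSup fun E hE => (hcS hE).1,
      (hcS hD).2.1.trans (le_sSup hD), fun hmc => ?_⟩, fun _ => le_sSup⟩
    obtain ⟨E, hE, hmE⟩ := (Submodule.mem_sSup_of_directed ⟨D, hD⟩ hc.directedOn).mp hmc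
    exact (hcS hE).2.2 hmE
  obtain ⟨U, -, hU⟩ := zorn_le_nonempty₀ S hchain N ⟨hN, le_rfl, hm⟩
  obtain ⟨hUgr, hNU, hmU⟩ := hU.prop
  refine ⟨U, ⟨hUgr, fun hU_top => hmU (hU_top ▸ Submodule.mem_top), fun T hT hUT => ?_⟩,
    hNU, hmU⟩
  by_contra hUT'
  -- a member of `T` avoiding `m` would lie in `S` above `U`, hence equal `U`
  refine hmU (hUT ▸ Submodule.mem_sInf.mpr fun D hD => ?_)
  by_contra hmD
  have hUD : U ≤ D := hUT ▸ sInf_le hD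
  exact hUT' (le_antisymm hUD (hU.2 ⟨hT D hD, hNU.trans hUD, hmD⟩ hUD) ▸ hD)

lemma IsGradedSubmodule.exists_completelyGradedIrreducible_not_smul_le {N : Submodule R M}
    (hN : IsGradedSubmodule ℳ N) {a : R} {C : Submodule R M} (h : ¬ a • C ≤ N) :
    ∃ U, CompletelyGradedIrreducible ℳ U ∧ N ≤ U ∧ ¬ a • C ≤ U := by
  rw [← Submodule.mem_colon_iff_le, Submodule.mem_colon] at h
  push Not at h
  obtain ⟨c, hc, hac⟩ := h
  obtain ⟨U, hU, hNU, hacU⟩ := hN.exists_completelyGradedIrreducible hac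
  exact ⟨U, hU, hNU, fun hle => hacU (hle (Submodule.smul_mem_pointwise_smul c a C hc))⟩

end GradedSubmodule

section Decomposition

variable {ι R M : Type*} [DecidableEq ι] [CommRing R] [AddCommGroup M] [Module R M]
  (ℳ : ι → AddSubgroup M) [Decomposition ℳ]

lemma isGradedSubmodule_of_isHomogeneous {N : Submodule R M} (hN : SetLike.IsHomogeneous ℳ N) :
    IsGradedSubmodule ℳ N := by
  classical
  intro n hn
  rw [← sum_support_decompose ℳ n]
  exact Submodule.sum_mem _ fun i _ => Submodule.subset_span ⟨hN i hn, i, (decompose ℳ n i).2⟩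

end Decomposition

namespace IsModuleGrading

variable {G R M : Type*} [Group G] [DecidableEq G] [CommRing R] [AddCommGroup M] [Module R M]
  {𝒜 : G → AddSubgroup R} {ℳ : G → AddSubgroup M} [Decomposition ℳ]

lemma decompose_smul_of_mem_left (hℳ : IsModuleGrading 𝒜 ℳ) {r : R} {γ : G} (hr : r ∈ 𝒜 γ)
    (m : M) (α : G) :
    (decompose ℳ (r • m) α : M) = r • (decompose ℳ m (γ⁻¹ * α) : M) := by
  induction m using Decomposition.inductionOn ℳ with
  | zero => simp
  | @homogeneous β m =>
    obtain ⟨m, hm⟩ := m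
    by_cases hα : γ * β = α
    · subst hα
      rw [inv_mul_cancel_left, decompose_of_mem_same ℳ (hℳ.smul_mem hr hm),
        decompose_of_mem_same ℳ hm]
    · have hβ : β ≠ γ⁻¹ * α := fun h => hα (by rw [h, mul_inv_cancel_left])
      rw [decompose_of_mem_ne ℳ (hℳ.smul_mem hr hm) hα, decompose_of_mem_ne ℳ hm hβ, smul_zero]
  | add m m' hm hm' =>
    simp only [smul_add, decompose_add, DirectSum.add_apply, AddSubgroup.coe_add, hm, hm']

lemma decompose_smul_of_mem_right [Decomposition 𝒜] (hℳ : IsModuleGrading 𝒜 ℳ) (r : R) {m : M}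
    {β : G} (hm : m ∈ ℳ β) (γ : G) :
    (decompose ℳ (r • m) (γ * β) : M) = (decompose 𝒜 r γ : R) • m := by
  induction r using Decomposition.inductionOn 𝒜 with
  | zero => simp
  | @homogeneous δ r =>
    obtain ⟨r, hr⟩ := r
    by_cases hγ : δ = γ
    · subst hγ
      rw [decompose_of_mem_same ℳ (hℳ.smul_mem hr hm), decompose_of_mem_same 𝒜 hr]
    · have hγβ : δ * β ≠ γ * β := fun h => hγ (mul_right_cancel h)
      rw [decompose_of_mem_ne ℳ (hℳ.smul_mem hr hm) hγβ, decompose_of_mem_ne 𝒜 hr hγ, zero_smul]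
  | add r r' hr hr' =>
    simp only [add_smul, decompose_add, DirectSum.add_apply, AddSubgroup.coe_add, hr, hr']

lemma isHomogeneous_of_isGradedSubmodule [Decomposition 𝒜] (hℳ : IsModuleGrading 𝒜 ℳ)
    {N : Submodule R M} (hN : IsGradedSubmodule ℳ N) : SetLike.IsHomogeneous ℳ N := by
  intro α n hn
  replace hn := hN n hn
  induction hn using Submodule.span_induction generalizing α with
  | mem m hm =>
    obtain ⟨hmN, β, hmβ⟩ := hm
    by_cases hβ : β = α
    · rwa [← hβ, decompose_of_mem_same ℳ hmβ]
    · rw [decompose_of_mem_ne ℳ hmβ hβ]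
      exact N.zero_mem
  | zero => simp
  | add m m' _ _ hm hm' =>
    rw [decompose_add, DirectSum.add_apply, AddSubgroup.coe_add]
    exact N.add_mem (hm α) (hm' α)
  | smul r m _ hm =>
    induction r using Decomposition.inductionOn 𝒜 with
    | zero => simp
    | homogeneous r =>
      rw [hℳ.decompose_smul_of_mem_left r.2]
      exact N.smul_mem _ (hm _)
    | add r r' hr hr' =>
      rw [add_smul, decompose_add, DirectSum.add_apply, AddSubgroup.coe_add]
      exact N.add_mem hr hr'

lemma isGradedSubmodule_inf [Decomposition 𝒜] (hℳ : IsModuleGrading 𝒜 ℳ)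
    {N₁ N₂ : Submodule R M} (hN₁ : IsGradedSubmodule ℳ N₁) (hN₂ : IsGradedSubmodule ℳ N₂) :
    IsGradedSubmodule ℳ (N₁ ⊓ N₂) :=
  isGradedSubmodule_of_isHomogeneous ℳ fun α _ hn =>
    ⟨hℳ.isHomogeneous_of_isGradedSubmodule hN₁ α hn.1,
      hℳ.isHomogeneous_of_isGradedSubmodule hN₂ α hn.2⟩

lemma isHomogeneous_colon [Decomposition 𝒜] (hℳ : IsModuleGrading 𝒜 ℳ)
    {N C : Submodule R M} (hN : SetLike.IsHomogeneous ℳ N) (hC : IsGradedSubmodule ℳ C) :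
    SetLike.IsHomogeneous 𝒜 (N.colon C) := by
  intro γ r hr
  refine Submodule.colon_mono le_rfl hC ?_
  rw [Submodule.colon_span, Submodule.mem_colon]
  rintro c ⟨hcC, β, hcβ⟩
  rw [← hℳ.decompose_smul_of_mem_right r hcβ]
  exact hN _ (Submodule.mem_colon.mp hr c hcC)

end IsModuleGrading

section TwoAbsorbing

variable {G R M : Type*} [CommRing R] [AddCommGroup M] [Module R M]
  {𝒜 : G → AddSubgroup R} {ℳ : G → AddSubgroup M} {C N : Submodule R M}

lemma IsGrStronglyClassical2AbsorbingSecond.colon_mem_or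
    (hC : IsGrStronglyClassical2AbsorbingSecond 𝒜 ℳ C) (hN : IsGradedSubmodule ℳ N) {r s t : R}
    (hr : ∃ α, r ∈ 𝒜 α) (hs : ∃ β, s ∈ 𝒜 β) (ht : ∃ γ, t ∈ 𝒜 γ)
    (hrst : r * s * t ∈ N.colon C) :
    r * s ∈ N.colon C ∨ r * t ∈ N.colon C ∨ s * t ∈ N.colon C := by
  simp only [Submodule.mem_colon_iff_le] at hrst ⊢
  by_contra! h
  obtain ⟨hrs, hrt, hst⟩ := h
  obtain ⟨U₁, hU₁, hNU₁, hrsU₁⟩ := hN.exists_completelyGradedIrreducible_not_smul_le hrs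
  obtain ⟨U₂, hU₂, hNU₂, hstU₂⟩ := hN.exists_completelyGradedIrreducible_not_smul_le hst
  obtain ⟨U₃, hU₃, hNU₃, hrtU₃⟩ := hN.exists_completelyGradedIrreducible_not_smul_le hrt
  have hle : r • s • t • C ≤ U₁ ⊓ U₂ ⊓ U₃ := by
    rw [smul_smul, smul_smul]
    exact hrst.trans (le_inf (le_inf hNU₁ hNU₂) hNU₃)
  rcases hC.2.2 r s t hr hs ht U₁ U₂ U₃ hU₁ hU₂ hU₃ hle with h | h | h <;> rw [smul_smul] at h
  · exact hrsU₁ (h.trans (inf_le_left.trans inf_le_left))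
  · exact hstU₂ (h.trans (inf_le_left.trans inf_le_right))
  · exact hrtU₃ (h.trans inf_le_right)

variable [Group G] [DecidableEq G] [Decomposition 𝒜] [Decomposition ℳ]

lemma IsGrStronglyClassical2AbsorbingSecond.isGr2AbsorbingIdeal_colon
    (hℳ : IsModuleGrading 𝒜 ℳ) (hC : IsGrStronglyClassical2AbsorbingSecond 𝒜 ℳ C)
    (hN : IsGradedSubmodule ℳ N) (hCN : ¬ C ≤ N) : IsGr2AbsorbingIdeal 𝒜 (N.colon C) :=
  ⟨fun h => hCN ((Submodule.colon_eq_top_iff_subset _).mp h),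
    -- `IsGradedIdeal 𝒜 I` is `IsGradedSubmodule 𝒜 I` for `R` graded as a module over itself
    isGradedSubmodule_of_isHomogeneous 𝒜
      (hℳ.isHomogeneous_colon (hℳ.isHomogeneous_of_isGradedSubmodule hN) hC.2.1),
    fun _ _ _ hr hs ht => hC.colon_mem_or hN hr hs ht⟩

lemma isGrStronglyClassical2AbsorbingSecond_of_isGr2AbsorbingIdeal_colon
    (hℳ : IsModuleGrading 𝒜 ℳ) (hC0 : C ≠ ⊥) (hC : IsGradedSubmodule ℳ C)
    (h : ∀ N : Submodule R M, IsGradedSubmodule ℳ N → ¬ C ≤ N →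
      IsGr2AbsorbingIdeal 𝒜 (N.colon C)) :
    IsGrStronglyClassical2AbsorbingSecond 𝒜 ℳ C := by
  refine ⟨hC0, hC, fun r s t hr hs ht U₁ U₂ U₃ hU₁ hU₂ hU₃ hle => ?_⟩
  simp only [smul_smul, ← mul_assoc, ← Submodule.mem_colon_iff_le] at hle ⊢
  by_cases hCU : C ≤ U₁ ⊓ U₂ ⊓ U₃
  · exact Or.inl (Submodule.mem_colon.mpr fun c hc => hCU (C.smul_mem _ hc))
  have hU := hℳ.isGradedSubmodule_inf (hℳ.isGradedSubmodule_inf hU₁.1 hU₂.1) hU₃.1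
  rcases (h _ hU hCU).2.2 r s t hr hs ht hle with h | h | h
  exacts [Or.inl h, Or.inr (Or.inr h), Or.inr (Or.inl h)]

end TwoAbsorbing

theorem stmt13 {G : Type*} [Group G] [DecidableEq G] {R : Type*} [CommRing R]
    {M : Type*} [AddCommGroup M] [Module R M]
    (𝒜 : G → AddSubgroup R) (ℳ : G → AddSubgroup M)
    (h𝒜 : IsRingGrading 𝒜) (hℳ : IsModuleGrading 𝒜 ℳ)
    (C : Submodule R M) (hC0 : C ≠ ⊥) (hCgr : IsGradedSubmodule ℳ C) :
    IsGrStronglyClassical2AbsorbingSecond 𝒜 ℳ C ↔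
      ∀ N : Submodule R M, IsGradedSubmodule ℳ N → ¬ C ≤ N →
        IsGr2AbsorbingIdeal 𝒜 (N.colon C) := by
  let _ := h𝒜.isInternal.chooseDecomposition
  let _ := hℳ.isInternal.chooseDecomposition
  exact ⟨fun hC _ hN hCN => hC.isGr2AbsorbingIdeal_colon hℳ hN hCN,
    isGrStronglyClassical2AbsorbingSecond_of_isGr2AbsorbingIdeal_colon hℳ hC0 hCgr⟩
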